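/- Let X be a graph as in the context, fix a vertex x₀, and let m ≥ 5 be an integer. Then (N_m(x₀) − N_{m−2}(x₀)) − (N_{m−2}(x₀) − N_{m−4}(x₀)) = (c_m(x₀) − c_{m−2}(x₀)) − (deg(x₀)−1)·(c_{m−2}(x₀) − c_{m−4}(x₀)) + (Δ_X c_{m−2})(x₀). -/

import Mathlib

/-- A graph in the sense of Serre: an edge set with origin/terminus maps and a
fixed-point-free involution `bar` satisfying `o e = t (bar e)`.
Loops and multiple edges are allowed. -/
structure SerreGraph where
  V : Type
  E : Type
  o : E → V
  t : E → V
  bar : E → E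
  bar_ne : ∀ e, bar e ≠ e
  bar_bar : ∀ e, bar (bar e) = e
  o_bar : ∀ e, o e = t (bar e)

namespace SerreGraph

variable (X : SerreGraph)

/-- The set of edges emanating from `x`. -/
def edgesAt (x : X.V) : Set X.E := {e | X.o e = x}

/-- The degree of a vertex. -/
noncomputable def deg (x : X.V) : ℕ := Nat.card (X.edgesAt x)

/-- A sequence of `m` edges is a path when consecutive edges are composable. -/
def IsPath {m : ℕ} (p : Fin m → X.E) : Prop :=
  ∀ (i : ℕ) (h : i + 1 < m), X.t (p ⟨i, by omega⟩) = X.o (p ⟨i + 1, h⟩)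

/-- No backtracking: no edge is followed by its reversal. -/
def NoBacktrack {m : ℕ} (p : Fin m → X.E) : Prop :=
  ∀ (i : ℕ) (h : i + 1 < m), p ⟨i + 1, h⟩ ≠ X.bar (p ⟨i, by omega⟩)

/-- A geodesic loop at `x`: a closed path starting and ending at `x` with no
backtracking. -/
def IsGeodesicLoopAt {m : ℕ} (x : X.V) (p : Fin m → X.E) : Prop :=
  X.IsPath p ∧ X.NoBacktrack p ∧
    ∀ (h : 0 < m), X.o (p ⟨0, h⟩) = x ∧ X.t (p ⟨m - 1, by omega⟩) = x

/-- A path has a tail when its last edge is the reversal of its first edge. -/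
def HasTail {m : ℕ} (p : Fin m → X.E) : Prop :=
  ∃ (h : 0 < m), p ⟨m - 1, by omega⟩ = X.bar (p ⟨0, h⟩)

/-- `c m x` is the number of geodesic loops of length `m` starting at `x`. -/
noncomputable def c (m : ℕ) (x : X.V) : ℕ :=
  Nat.card {p : Fin m → X.E // X.IsGeodesicLoopAt x p}

/-- `N m x` is the number of closed geodesics of length `m` starting at `x`,
i.e. geodesic loops with no tail. -/
noncomputable def N (m : ℕ) (x : X.V) : ℕ :=
  Nat.card {p : Fin m → X.E // X.IsGeodesicLoopAt x p ∧ ¬ X.HasTail p}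

/-- The formal combinatorial Laplacian applied to a function on vertices:
`(Δ f)(x) = deg(x)·f(x) − Σ_{e ∈ E_x} f(t(e))`. -/
noncomputable def lap (f : X.V → ℤ) (x : X.V) : ℤ :=
  (X.deg x : ℤ) * f x - ∑ᶠ e ∈ X.edgesAt x, f (X.t e)

/-- Connectedness: any two vertices are joined by a path. -/
def Connected : Prop :=
  ∀ x y : X.V, x = y ∨ ∃ (m : ℕ) (p : Fin m → X.E) (h : 0 < m),
    X.IsPath p ∧ X.o (p ⟨0, h⟩) = x ∧ X.t (p ⟨m - 1, by omega⟩) = y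

end SerreGraph

/-!
Group the pairs `(e, q)` counted by `∑_{e ∈ E_{x₀}} c_{m-2}(t e)` according to whether the
geodesic loop `q` at `t e` starts with `ē` and whether it ends with `e`. If it does neither,
`e q ē` is a geodesic loop of length `m` at `x₀` with a tail. If it ends with `e` but does not start
with `ē`, then `e` followed by `q` minus its last edge is a closed geodesic of length `m - 2`
starting with `e`. Traversing `q` backwards swaps this case with the case where `q` starts with
`ē` but does not end with `e`. If it does both, then `q = ē s e` for a geodesic loop `s` of length
`m - 4` at `x₀` that neither starts with `e` nor ends with `ē`; by inclusion–exclusion, summing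
over `e` gives `(deg x₀ - 2) c_{m-4} + (c_{m-4} - N_{m-4})`. Loops with a tail number `c - N`, and
the identity follows.
-/

instance Finite.subtype_and {α : Type*} {P : α → Prop} (Q : α → Prop) [Finite {a // P a}] :
    Finite {a // P a ∧ Q a} :=
  Finite.of_injective (Subtype.map id fun _ h => h.1)
    (Subtype.map_injective _ Function.injective_id)

theorem Nat.card_subtype_eq_card_and_add_card_and_not {α : Type*} (P Q : α → Prop)
    [Finite {a // P a}] :
    Nat.card {a // P a} = Nat.card {a // P a ∧ Q a} + Nat.card {a // P a ∧ ¬Q a} := by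
  classical
  rw [← Nat.card_sum]
  exact Nat.card_congr ((Equiv.sumCompl fun a : {a // P a} => Q a).symm.trans
    ((Equiv.subtypeSubtypeEquivSubtypeInter P Q).sumCongr
      (Equiv.subtypeSubtypeEquivSubtypeInter P fun a => ¬Q a)))

theorem Nat.card_and_not_and_not_add_card_and_add_card_and {α : Type*} (P A B : α → Prop)
    [Finite {a // P a}] :
    Nat.card {a // (P a ∧ ¬A a) ∧ ¬B a} + Nat.card {a // P a ∧ A a} +
        Nat.card {a // P a ∧ B a} =
      Nat.card {a // P a} + Nat.card {a // (P a ∧ A a) ∧ B a} := by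
  have hA := Nat.card_subtype_eq_card_and_add_card_and_not P A
  have hB := Nat.card_subtype_eq_card_and_add_card_and_not (fun a => P a ∧ ¬A a) B
  have hAB := Nat.card_subtype_eq_card_and_add_card_and_not (fun a => P a ∧ B a) A
  have hcomm : ∀ C D : α → Prop,
      Nat.card {a // (P a ∧ C a) ∧ D a} = Nat.card {a // (P a ∧ D a) ∧ C a} := fun _ _ =>
    Nat.card_congr (Equiv.subtypeEquivRight fun _ => _root_.and_right_comm)
  rw [hcomm B A] at hAB
  rw [hcomm (fun a => ¬A a) B] at hB
  omega

theorem Finset.sum_natCard_subtype_fiber {α β : Type*} (s : Finset β) (f : α → β)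
    (P : α → Prop) [Finite {a // P a}] (h : ∀ a, P a → f a ∈ s) :
    ∑ b ∈ s, Nat.card {a // P a ∧ f a = b} = Nat.card {a // P a} := by
  rw [← Finset.sum_coe_sort, ← Nat.card_sigma]
  exact Nat.card_congr
    { toFun := fun x => ⟨x.2.1, x.2.2.1⟩
      invFun := fun a => ⟨⟨f a, h a a.2⟩, a.1, a.2, rfl⟩
      left_inv := fun x => Sigma.subtype_ext (Subtype.ext x.2.2.2) rfl
      right_inv := fun _ => rfl }

theorem Fin.natCard_subtype_and_zero_eq {α : Type*} {n : ℕ} (P : (Fin (n + 1) → α) → Prop)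
    (a : α) : Nat.card {p // P p ∧ p 0 = a} = Nat.card {q : Fin n → α // P (Fin.cons a q)} :=
  Nat.card_congr
    { toFun := fun p => ⟨Fin.tail p.1, by simpa [← p.2.2] using p.2.1⟩
      invFun := fun q => ⟨Fin.cons a q.1, q.2, Fin.cons_zero _ _⟩
      left_inv := fun p => Subtype.ext (show Fin.cons a (Fin.tail p.1) = p.1 by simp [← p.2.2])
      right_inv := fun q => Subtype.ext (Fin.tail_cons (α := fun _ => α) a q.1) }

theorem Fin.natCard_subtype_and_last_eq {α : Type*} {n : ℕ} (P : (Fin (n + 1) → α) → Prop)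
    (a : α) :
    Nat.card {p // P p ∧ p (Fin.last n) = a} = Nat.card {q : Fin n → α // P (Fin.snoc q a)} :=
  Nat.card_congr
    { toFun := fun p => ⟨Fin.init p.1, by simpa [← p.2.2] using p.2.1⟩
      invFun := fun q => ⟨Fin.snoc q.1 a, q.2, Fin.snoc_last _ _⟩
      left_inv := fun p => Subtype.ext (show Fin.snoc (Fin.init p.1) a = p.1 by simp [← p.2.2])
      right_inv := fun q => Subtype.ext (Fin.init_snoc (α := fun _ => α) a q.1) }

namespace SerreGraph

variable (X : SerreGraph)

attribute [simp] bar_bar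

@[simp] theorem t_bar (e : X.E) : X.t (X.bar e) = X.o e := (X.o_bar e).symm

@[simp] theorem o_bar_eq_t (e : X.E) : X.o (X.bar e) = X.t e := by rw [X.o_bar, X.bar_bar]

@[simp] theorem bar_inj {a b : X.E} : X.bar a = X.bar b ↔ a = b :=
  (Function.LeftInverse.injective X.bar_bar).eq_iff

theorem bar_eq_comm {a b : X.E} : X.bar a = b ↔ a = X.bar b := by
  rw [← bar_inj, bar_bar]

theorem ne_bar_comm {a b : X.E} : a ≠ X.bar b ↔ b ≠ X.bar a := by
  rw [ne_eq, ← bar_inj, bar_bar, eq_comm]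

/-- Indexing by `Fin (n + 1)` keeps the length positive, so that the endpoints can be read off
the first and the last edge. -/
def IsGeodesicPath (x y : X.V) {n : ℕ} (p : Fin (n + 1) → X.E) : Prop :=
  (∀ i : Fin n, X.t (p i.castSucc) = X.o (p i.succ) ∧ p i.succ ≠ X.bar (p i.castSucc)) ∧
    X.o (p 0) = x ∧ X.t (p (Fin.last n)) = y

def reverse {n : ℕ} (p : Fin n → X.E) : Fin n → X.E := fun i => X.bar (p i.rev)

variable {X}

theorem isGeodesicLoopAt_iff {n : ℕ} {x : X.V} {p : Fin (n + 1) → X.E} :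
    X.IsGeodesicLoopAt x p ↔ X.IsGeodesicPath x x p := by
  simp only [IsGeodesicLoopAt, IsPath, NoBacktrack, IsGeodesicPath, Fin.forall_iff, forall_and,
    Nat.add_lt_add_iff_right, and_assoc, Nat.succ_pos, forall_true_left]
  rfl

theorem hasTail_iff {n : ℕ} {p : Fin (n + 1) → X.E} :
    X.HasTail p ↔ p (Fin.last n) = X.bar (p 0) :=
  ⟨fun ⟨_, h⟩ => h, fun h => ⟨n.succ_pos, h⟩⟩

theorem c_succ_eq (n : ℕ) (x : X.V) :
    X.c (n + 1) x = Nat.card {p : Fin (n + 1) → X.E // X.IsGeodesicPath x x p} :=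
  Nat.card_congr (Equiv.subtypeEquivRight fun _ => isGeodesicLoopAt_iff)

theorem N_succ_eq (n : ℕ) (x : X.V) :
    X.N (n + 1) x = Nat.card {p : Fin (n + 1) → X.E //
      X.IsGeodesicPath x x p ∧ p (Fin.last n) ≠ X.bar (p 0)} :=
  Nat.card_congr (Equiv.subtypeEquivRight fun _ => by rw [isGeodesicLoopAt_iff, hasTail_iff])

theorem deg_eq_card_toFinset {x : X.V} (hx : (X.edgesAt x).Finite) :
    X.deg x = hx.toFinset.card := by
  rw [deg, Nat.card_coe_set_eq, Set.ncard_eq_toFinset_card _ hx]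

theorem lap_eq_sum (f : X.V → ℤ) {x : X.V} (hx : (X.edgesAt x).Finite) :
    X.lap f x = X.deg x * f x - ∑ e ∈ hx.toFinset, f (X.t e) := by
  rw [lap, finsum_mem_eq_finite_toFinset_sum _ hx]

theorem isGeodesicPath_cons {n : ℕ} {x y : X.V} {e : X.E} {q : Fin (n + 1) → X.E} :
    X.IsGeodesicPath x y (Fin.cons e q : Fin (n + 2) → X.E) ↔
      X.o e = x ∧ q 0 ≠ X.bar e ∧ X.IsGeodesicPath (X.t e) y q := by
  simp only [IsGeodesicPath, Fin.forall_fin_succ, Fin.castSucc_zero, Fin.cons_zero, Fin.cons_succ,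
    ← Fin.succ_castSucc]
  tauto

theorem isGeodesicPath_snoc {n : ℕ} {x y : X.V} {e : X.E} {q : Fin (n + 1) → X.E} :
    X.IsGeodesicPath x y (Fin.snoc q e : Fin (n + 2) → X.E) ↔
      X.t e = y ∧ e ≠ X.bar (q (Fin.last n)) ∧ X.IsGeodesicPath x (X.o e) q := by
  simp only [IsGeodesicPath, Fin.forall_fin_succ', Fin.snoc_castSucc, Fin.snoc_last,
    Fin.succ_castSucc, Fin.succ_last, ← Fin.castSucc_zero]
  tauto

theorem reverse_involutive {n : ℕ} : Function.Involutive (X.reverse (n := n)) := fun p => by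
  funext i; simp [reverse]

@[simp] theorem reverse_reverse {n : ℕ} (p : Fin n → X.E) : X.reverse (X.reverse p) = p :=
  reverse_involutive p

@[simp] theorem reverse_zero {n : ℕ} (p : Fin (n + 1) → X.E) :
    X.reverse p 0 = X.bar (p (Fin.last n)) := by simp [reverse]

@[simp] theorem reverse_last {n : ℕ} (p : Fin (n + 1) → X.E) :
    X.reverse p (Fin.last n) = X.bar (p 0) := by simp [reverse]

theorem IsGeodesicPath.reverse {n : ℕ} {x y : X.V} {p : Fin (n + 1) → X.E}
    (hp : X.IsGeodesicPath x y p) : X.IsGeodesicPath y x (X.reverse p) := by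
  obtain ⟨hstep, hx, hy⟩ := hp
  refine ⟨fun i => ?_, by simpa using hy, by simpa using hx⟩
  obtain ⟨hadj, hnb⟩ := hstep i.rev
  simp only [SerreGraph.reverse, Fin.rev_castSucc, Fin.rev_succ, t_bar, o_bar_eq_t, bar_bar]
  exact ⟨hadj.symm, hnb.symm⟩

@[simp] theorem isGeodesicPath_reverse {n : ℕ} {x y : X.V} {p : Fin (n + 1) → X.E} :
    X.IsGeodesicPath x y (X.reverse p) ↔ X.IsGeodesicPath y x p :=
  ⟨fun h => by simpa using h.reverse, IsGeodesicPath.reverse⟩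

theorem finite_isGeodesicPath (hfin : ∀ x : X.V, (X.edgesAt x).Finite) (n : ℕ)
    (x y : X.V) : Finite {p : Fin (n + 1) → X.E // X.IsGeodesicPath x y p} := by
  suffices ∀ x, {p : Fin (n + 1) → X.E | X.IsGeodesicPath x y p}.Finite from (this x).to_subtype
  induction n with
  | zero =>
    intro x
    refine ((hfin x).image fun e (_ : Fin 1) => e).subset fun p hp => ⟨p 0, hp.2.1, ?_⟩
    funext i
    rw [Fin.fin_one_eq_zero i]
  | succ n ih =>
    intro x
    refine (((hfin x).prod ((hfin x).biUnion fun e _ => ih (X.t e))).image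
      fun z => Fin.cons z.1 z.2).subset fun p hp => ?_
    replace hp : X.IsGeodesicPath x y (Fin.cons (p 0) (Fin.tail p)) := by
      rwa [Fin.cons_self_tail]
    rw [isGeodesicPath_cons] at hp
    exact ⟨(p 0, Fin.tail p), ⟨hp.1, Set.mem_biUnion hp.1 hp.2.2⟩, Fin.cons_self_tail p⟩

theorem card_tail_add_N (hfin : ∀ x : X.V, (X.edgesAt x).Finite) (n : ℕ) (x : X.V) :
    Nat.card {p : Fin (n + 1) → X.E //
        X.IsGeodesicPath x x p ∧ p (Fin.last _) = X.bar (p 0)} + X.N (n + 1) x =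
      X.c (n + 1) x := by
  have := finite_isGeodesicPath hfin n x x
  rw [c_succ_eq, N_succ_eq]
  exact (Nat.card_subtype_eq_card_and_add_card_and_not _ _).symm

theorem card_tail_and_head_eq {n : ℕ} (x : X.V) (e : X.E) :
    Nat.card {p : Fin (n + 1) → X.E //
        (X.IsGeodesicPath x x p ∧ p (Fin.last _) = X.bar (p 0)) ∧ p 0 = e} =
      Nat.card {p : Fin (n + 1) → X.E //
        (X.IsGeodesicPath x x p ∧ p 0 = e) ∧ p (Fin.last _) = X.bar e} :=
  Nat.card_congr (Equiv.subtypeEquivRight fun _ =>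
    ⟨fun ⟨⟨hp, hl⟩, h0⟩ => ⟨⟨hp, h0⟩, h0 ▸ hl⟩, fun ⟨⟨hp, h0⟩, hl⟩ => ⟨⟨hp, h0 ▸ hl⟩, h0⟩⟩)

theorem card_head_eq_last_eq {n : ℕ} {x y : X.V} {a b : X.E} (ha : X.o a = x) (hb : X.t b = y) :
    Nat.card {p : Fin (n + 3) → X.E //
        (X.IsGeodesicPath x y p ∧ p 0 = a) ∧ p (Fin.last _) = b} =
      Nat.card {s : Fin (n + 1) → X.E //
        (X.IsGeodesicPath (X.t a) (X.o b) s ∧ s 0 ≠ X.bar a) ∧ s (Fin.last _) ≠ X.bar b} :=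
  calc _ = Nat.card {p : Fin (n + 3) → X.E //
          (X.IsGeodesicPath x y p ∧ p (Fin.last _) = b) ∧ p 0 = a} :=
        Nat.card_congr (Equiv.subtypeEquivRight fun _ => and_right_comm)
    _ = Nat.card {q : Fin (n + 2) → X.E //
          X.IsGeodesicPath x y (Fin.cons a q) ∧ q (Fin.last _) = b} := by
        rw [Fin.natCard_subtype_and_zero_eq]; simp only [Fin.cons_last]
    _ = Nat.card {s : Fin (n + 1) → X.E // X.IsGeodesicPath x y (Fin.cons a (Fin.snoc s b))} :=
        Fin.natCard_subtype_and_last_eq _ b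
    _ = _ := Nat.card_congr (Equiv.subtypeEquivRight fun s => by
        simp only [isGeodesicPath_cons, isGeodesicPath_snoc, Fin.snoc_apply_zero, ha, hb,
          ne_bar_comm (a := b)]
        tauto)

theorem card_bar_head_last_eq {n : ℕ} {x : X.V} {e : X.E} (he : X.o e = x) :
    Nat.card {q : Fin (n + 3) → X.E //
        (X.IsGeodesicPath (X.t e) (X.t e) q ∧ q 0 = X.bar e) ∧ q (Fin.last _) = e} =
      Nat.card {s : Fin (n + 1) → X.E //
        (X.IsGeodesicPath x x s ∧ s 0 ≠ e) ∧ s (Fin.last _) ≠ X.bar e} := by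
  simpa [he] using card_head_eq_last_eq (n := n) (b := e) (X.o_bar_eq_t e) rfl

theorem card_tail_head_eq {n : ℕ} {x : X.V} {e : X.E} (he : X.o e = x) :
    Nat.card {p : Fin (n + 3) → X.E //
        (X.IsGeodesicPath x x p ∧ p (Fin.last _) = X.bar (p 0)) ∧ p 0 = e} =
      Nat.card {q : Fin (n + 1) → X.E //
        (X.IsGeodesicPath (X.t e) (X.t e) q ∧ q 0 ≠ X.bar e) ∧ q (Fin.last _) ≠ e} := by
  simpa using (card_tail_and_head_eq x e).trans
    (card_head_eq_last_eq (n := n) (b := X.bar e) he (by rwa [t_bar]))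

theorem card_closed_head_eq {n : ℕ} {x : X.V} {e : X.E} (he : X.o e = x) :
    Nat.card {p : Fin (n + 2) → X.E //
        (X.IsGeodesicPath x x p ∧ p (Fin.last _) ≠ X.bar (p 0)) ∧ p 0 = e} =
      Nat.card {q : Fin (n + 2) → X.E //
        (X.IsGeodesicPath (X.t e) (X.t e) q ∧ q 0 ≠ X.bar e) ∧ q (Fin.last _) = e} := by
  rw [Fin.natCard_subtype_and_zero_eq, Fin.natCard_subtype_and_last_eq]
  refine Nat.card_congr (Equiv.subtypeEquivRight fun r => ?_)
  simp only [isGeodesicPath_cons, isGeodesicPath_snoc, Fin.cons_zero, Fin.cons_last,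
    Fin.snoc_apply_zero, he, ne_bar_comm (a := e)]
  tauto

theorem card_head_eq_bar_last_ne {n : ℕ} (y : X.V) (e : X.E) :
    Nat.card {q : Fin (n + 1) → X.E //
        (X.IsGeodesicPath y y q ∧ q 0 = X.bar e) ∧ q (Fin.last _) ≠ e} =
      Nat.card {q : Fin (n + 1) → X.E //
        (X.IsGeodesicPath y y q ∧ q 0 ≠ X.bar e) ∧ q (Fin.last _) = e} :=
  Nat.card_congr (Equiv.subtypeEquiv (reverse_involutive.toPerm _) fun q => by
    simp only [Function.Involutive.coe_toPerm, isGeodesicPath_reverse, reverse_zero, reverse_last,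
      ne_eq, bar_eq_comm, bar_bar]
    tauto)

theorem c_add_three_t_eq (hfin : ∀ x : X.V, (X.edgesAt x).Finite) {n : ℕ} {x : X.V} {e : X.E}
    (he : X.o e = x) :
    X.c (n + 3) (X.t e) =
      Nat.card {s : Fin (n + 1) → X.E //
          (X.IsGeodesicPath x x s ∧ s 0 ≠ e) ∧ s (Fin.last _) ≠ X.bar e} +
        2 * Nat.card {p : Fin (n + 3) → X.E //
          (X.IsGeodesicPath x x p ∧ p (Fin.last _) ≠ X.bar (p 0)) ∧ p 0 = e} +
        Nat.card {p : Fin (n + 5) → X.E //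
          (X.IsGeodesicPath x x p ∧ p (Fin.last _) = X.bar (p 0)) ∧ p 0 = e} := by
  have := finite_isGeodesicPath hfin (n + 2) (X.t e) (X.t e)
  have h := Nat.card_subtype_eq_card_and_add_card_and_not (X.IsGeodesicPath (X.t e) (X.t e))
    fun q : Fin (n + 3) → X.E => q 0 = X.bar e
  have hhead := Nat.card_subtype_eq_card_and_add_card_and_not
    (fun q : Fin (n + 3) → X.E => X.IsGeodesicPath (X.t e) (X.t e) q ∧ q 0 = X.bar e)
    fun q => q (Fin.last _) = e
  have hnothead := Nat.card_subtype_eq_card_and_add_card_and_not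
    (fun q : Fin (n + 3) → X.E => X.IsGeodesicPath (X.t e) (X.t e) q ∧ q 0 ≠ X.bar e)
    fun q => q (Fin.last _) = e
  rw [c_succ_eq, h, hhead, hnothead, card_bar_head_last_eq he, card_head_eq_bar_last_ne,
    ← card_closed_head_eq he, ← card_tail_head_eq he]
  ring

theorem sum_card_head_ne_last_ne (hfin : ∀ x : X.V, (X.edgesAt x).Finite) (n : ℕ) (x : X.V) :
    ∑ e ∈ (hfin x).toFinset, Nat.card {s : Fin (n + 1) → X.E //
        (X.IsGeodesicPath x x s ∧ s 0 ≠ e) ∧ s (Fin.last _) ≠ X.bar e} + 2 * X.c (n + 1) x =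
      X.deg x * X.c (n + 1) x + Nat.card {s : Fin (n + 1) → X.E //
        X.IsGeodesicPath x x s ∧ s (Fin.last _) = X.bar (s 0)} := by
  have := finite_isGeodesicPath hfin n x x
  set S := (hfin x).toFinset
  have hhead : ∀ s : Fin (n + 1) → X.E, X.IsGeodesicPath x x s → s 0 ∈ S :=
    fun s hs => (hfin x).mem_toFinset.2 hs.2.1
  have hlast : ∀ s : Fin (n + 1) → X.E,
      X.IsGeodesicPath x x s → X.bar (s (Fin.last _)) ∈ S :=
    fun s hs => (hfin x).mem_toFinset.2 ((X.o_bar_eq_t _).trans hs.2.2)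
  have hsum_head : ∑ e ∈ S, Nat.card {s : Fin (n + 1) → X.E //
      X.IsGeodesicPath x x s ∧ s 0 = e} = X.c (n + 1) x := by
    rw [Finset.sum_natCard_subtype_fiber S _ _ hhead, c_succ_eq]
  have hsum_last : ∑ e ∈ S, Nat.card {s : Fin (n + 1) → X.E //
      X.IsGeodesicPath x x s ∧ s (Fin.last _) = X.bar e} = X.c (n + 1) x := by
    rw [c_succ_eq, ← Finset.sum_natCard_subtype_fiber S _ _ hlast]
    exact Finset.sum_congr rfl fun e _ =>
      Nat.card_congr (Equiv.subtypeEquivRight fun s => and_congr_right' X.bar_eq_comm.symm)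
  have hsum_both : ∑ e ∈ S, Nat.card {s : Fin (n + 1) → X.E //
      (X.IsGeodesicPath x x s ∧ s 0 = e) ∧ s (Fin.last _) = X.bar e} =
        Nat.card {s : Fin (n + 1) → X.E //
          X.IsGeodesicPath x x s ∧ s (Fin.last _) = X.bar (s 0)} := by
    rw [← Finset.sum_natCard_subtype_fiber S _ _ fun s hs => hhead s hs.1]
    exact Finset.sum_congr rfl fun e _ => (card_tail_and_head_eq x e).symm
  have h := Finset.sum_congr rfl fun e (_ : e ∈ S) => (c_succ_eq n x).symm ▸
    Nat.card_and_not_and_not_add_card_and_add_card_and (X.IsGeodesicPath x x)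
      (fun s => s 0 = e) (fun s => s (Fin.last _) = X.bar e)
  rw [Finset.sum_add_distrib, Finset.sum_add_distrib, Finset.sum_add_distrib, hsum_head,
    hsum_last, hsum_both, Finset.sum_const, smul_eq_mul] at h
  rw [deg_eq_card_toFinset (hfin x)]
  linarith

theorem sum_c_add_three_t (hfin : ∀ x : X.V, (X.edgesAt x).Finite) (n : ℕ) (x : X.V) :
    ∑ e ∈ (hfin x).toFinset, X.c (n + 3) (X.t e) + 2 * X.c (n + 1) x =
      X.deg x * X.c (n + 1) x +
        Nat.card {p : Fin (n + 1) → X.E //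
          X.IsGeodesicPath x x p ∧ p (Fin.last _) = X.bar (p 0)} +
        2 * X.N (n + 3) x +
        Nat.card {p : Fin (n + 5) → X.E //
          X.IsGeodesicPath x x p ∧ p (Fin.last _) = X.bar (p 0)} := by
  have := finite_isGeodesicPath hfin (n + 2) x x
  have := finite_isGeodesicPath hfin (n + 4) x x
  have hhead : ∀ {k : ℕ} {R : (Fin (k + 1) → X.E) → Prop} (p : Fin (k + 1) → X.E),
      X.IsGeodesicPath x x p ∧ R p → p 0 ∈ (hfin x).toFinset :=
    fun _ hp => (hfin x).mem_toFinset.2 hp.1.2.1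
  rw [Finset.sum_congr rfl fun e he => c_add_three_t_eq hfin ((hfin x).mem_toFinset.1 he),
    Finset.sum_add_distrib, Finset.sum_add_distrib, ← Finset.mul_sum,
    Finset.sum_natCard_subtype_fiber _ _ _ hhead, Finset.sum_natCard_subtype_fiber _ _ _ hhead,
    ← N_succ_eq]
  linarith [sum_card_head_ne_last_ne hfin n x]

end SerreGraph

theorem N_second_difference_general (X : SerreGraph)
    (hfin : ∀ x : X.V, (X.edgesAt x).Finite)
    (x₀ : X.V) (m : ℕ) (hm : 5 ≤ m) :
    ((X.N m x₀ : ℤ) - X.N (m - 2) x₀) - ((X.N (m - 2) x₀ : ℤ) - X.N (m - 4) x₀) =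
      ((X.c m x₀ : ℤ) - X.c (m - 2) x₀)
        - ((X.deg x₀ : ℤ) - 1) * ((X.c (m - 2) x₀ : ℤ) - X.c (m - 4) x₀)
        + X.lap (fun x => (X.c (m - 2) x : ℤ)) x₀ := by
  obtain ⟨n, rfl⟩ : ∃ n, m = n + 5 := ⟨m - 5, by omega⟩
  rw [show n + 5 - 2 = n + 3 by omega, show n + 5 - 4 = n + 1 by omega,
    X.lap_eq_sum _ (hfin x₀)]
  have key := congrArg (Nat.cast : ℕ → ℤ) (X.sum_c_add_three_t hfin n x₀)
  have h1 := congrArg (Nat.cast : ℕ → ℤ) (X.card_tail_add_N hfin n x₀)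
  have h5 := congrArg (Nat.cast : ℕ → ℤ) (X.card_tail_add_N hfin (n + 4) x₀)
  push_cast at key h1 h5
  linear_combination key + h1 + h5

/-- For `m ≥ 5`:
`(N_m − N_{m−2}) − (N_{m−2} − N_{m−4})
  = (c_m − c_{m−2}) − (deg(x₀)−1)(c_{m−2} − c_{m−4}) + (Δ_X c_{m−2})(x₀)`. -/
theorem N_second_difference (X : SerreGraph) [Countable X.V]
    (hconn : X.Connected)
    (hfin : ∀ x : X.V, (X.edgesAt x).Finite)
    (hbd : ∃ M : ℕ, ∀ x : X.V, X.deg x ≤ M)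
    (hdeg1 : ∀ x : X.V, X.deg x ≠ 1)
    (x₀ : X.V) (m : ℕ) (hm : 5 ≤ m) :
    ((X.N m x₀ : ℤ) - X.N (m - 2) x₀) - ((X.N (m - 2) x₀ : ℤ) - X.N (m - 4) x₀) =
      ((X.c m x₀ : ℤ) - X.c (m - 2) x₀)
        - ((X.deg x₀ : ℤ) - 1) * ((X.c (m - 2) x₀ : ℤ) - X.c (m - 4) x₀)
        + X.lap (fun x => (X.c (m - 2) x : ℤ)) x₀ :=
  N_second_difference_general X hfin x₀ m hm
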